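/- For all reals a ≥ 0, b ≥ 0, t with 0 < t ≤ 1, and integer l ≥ 1, we have (a + b)^l ≤ (1 + t)^(l−1)·a^l + (1 + 1/t)^(l−1)·b^l. -/

import Mathlib

theorem stmt_2 (a b t : ℝ) (ha : 0 ≤ a) (hb : 0 ≤ b) (ht0 : 0 < t) (ht1 : t ≤ 1)
    (l : ℕ) (hl : 1 ≤ l) :
    (a + b) ^ l ≤ (1 + t) ^ (l - 1) * a ^ l + (1 + 1 / t) ^ (l - 1) * b ^ l := by
  obtain ⟨k, rfl⟩ : ∃ k, l = k + 1 := ⟨l - 1, (Nat.succ_pred_eq_of_pos hl).symm⟩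
  simp only [Nat.add_sub_cancel]
  have ht : (0:ℝ) < 1 + t := by linarith
  have hC := (convexOn_pow (k + 1)).2 (Set.mem_Ici.mpr (by positivity : (0:ℝ) ≤ a*(1+t)))
      (Set.mem_Ici.mpr (by positivity : (0:ℝ) ≤ b*(1+t)/t))
      (by positivity : (0:ℝ) ≤ 1/(1+t)) (by positivity : (0:ℝ) ≤ t/(1+t))
      (by field_simp)
  simp only [smul_eq_mul] at hC
  have e1 : 1/(1+t) * (a*(1+t)) + t/(1+t) * (b*(1+t)/t) = a + b := by field_simp
  rw [e1] at hC
  refine hC.trans_eq ?_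
  have e2 : 1/(1+t) * (a*(1+t))^(k+1) = (1+t)^k * a^(k+1) := by
    rw [mul_pow, pow_succ]
    field_simp
    ring
  have e3 : t/(1+t) * (b*(1+t)/t)^(k+1) = (1+1/t)^k * b^(k+1) := by
    have h : (1:ℝ) + 1/t = (1+t)/t := by field_simp; ring
    rw [h]
    field_simp
    rw [div_pow, mul_pow, div_pow]
    field_simp
    ring
  rw [e2, e3]
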